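/- arXiv:1112.5211 — 3 statements merged into one kernel-verified Lean document; each statement's English description precedes it below -/
import Mathlib

section
/- Define the quiver Q with vertex set {A, B, C, a, b, c} and arrows A→a, a→A, B→b, b→B, C→c, c→C, a→b, a→c, b→a, b→c, c→a, c→b. Let t(n) denote the total number of walks in Q consisting of n arrows (starting at any vertex). Then t(1) = 12, t(2) = 30, and t(n) = 2·t(n−1) + t(n−2) for all n ≥ 3. -/
/-- Adjacency matrix of the quiver `Q` on ordered vertices `(A, B, C, a, b, c)`
with arrows `A→a, a→A, B→b, b→B, C→c, c→C, a→b, a→c, b→a, b→c, c→a, c→b`. -/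
def M : Matrix (Fin 6) (Fin 6) ℕ :=
  !![0,0,0,1,0,0;
     0,0,0,0,1,0;
     0,0,0,0,0,1;
     1,0,0,0,1,1;
     0,1,0,1,0,1;
     0,0,1,1,1,0]

/-- Total number of walks of `n` arrows in `Q` (from any vertex to any vertex). -/
def t (n : ℕ) : ℕ := ∑ i : Fin 6, ∑ j : Fin 6, (M ^ n) i j

open Matrix

def ones : Fin 6 → ℕ := fun _ => 1

lemma key : M ^ 3 *ᵥ ones = 2 • ((M ^ 2) *ᵥ ones) + M *ᵥ ones := by
  decide

lemma t_eq (n : ℕ) : t n = ∑ i : Fin 6, (M ^ n *ᵥ ones) i := by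
  unfold t
  congr 1; funext i
  simp [Matrix.mulVec, dotProduct, ones]

/-- `t 1 = 12`, `t 2 = 30`, and the total walk counts satisfy the Pell-type
recurrence `t n = 2 t (n−1) + t (n−2)` for `n ≥ 3`. -/
theorem walk_count_recurrence :
    t 1 = 12 ∧ t 2 = 30 ∧ ∀ n ≥ 3, t n = 2 * t (n - 1) + t (n - 2) := by
  refine ⟨by decide, by decide, ?_⟩
  intro n hn
  obtain ⟨k, rfl⟩ : ∃ k, n = k + 3 := ⟨n - 3, by omega⟩
  have h1 : k + 3 - 1 = k + 2 := by omega
  have h2 : k + 3 - 2 = k + 1 := by omega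
  rw [h1, h2, t_eq, t_eq, t_eq]
  have : M ^ (k + 3) *ᵥ ones = 2 • (M ^ (k + 2) *ᵥ ones) + M ^ (k + 1) *ᵥ ones := by
    rw [pow_add, pow_add, pow_add, pow_one, ← Matrix.mulVec_mulVec, key,
      Matrix.mulVec_add, Matrix.mulVec_smul, Matrix.mulVec_mulVec, Matrix.mulVec_mulVec]
  rw [this]
  simp [Finset.sum_add_distrib, Finset.mul_sum, two_mul]
end

section
/- Define the quiver Q with vertices {A, B, C, a, b, c} and arrows A→a, a→A, B→b, b→B, C→c, c→C, a→b, a→c, b→a, b→c, c→a, c→b. Let a_n be the number of walks in Q of n arrows starting at vertex a. Then a_n = P_{n+1} + P_n for all n ≥ 0, where (P_n) are the Pell numbers defined by P_0 = 0, P_1 = 1, P_{n+1} = 2P_n + P_{n−1}. -/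
/-- Number of walks of `n` arrows in `Q` starting at vertex `a` (index 3). -/
def aWalks (n : ℕ) : ℕ := ∑ j : Fin 6, (M ^ n) 3 j

open Matrix

theorem Matrix.pow_add_two_mulVec {ι R : Type*} [Fintype ι] [DecidableEq ι] [CommSemiring R]
    {A : Matrix ι ι R} {v : ι → R} {c : R} (h : A ^ 2 *ᵥ v = c • (A *ᵥ v) + v) (n : ℕ) :
    A ^ (n + 2) *ᵥ v = c • (A ^ (n + 1) *ᵥ v) + A ^ n *ᵥ v := by
  rw [pow_add, ← mulVec_mulVec, h, mulVec_add, mulVec_smul, mulVec_mulVec, ← pow_succ]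

theorem eq_of_two_step_recurrence {R : Type*} [Semiring R] {u v : ℕ → R} (c : R)
    (hu : ∀ n, u (n + 2) = c * u (n + 1) + u n) (hv : ∀ n, v (n + 2) = c * v (n + 1) + v n)
    (h0 : u 0 = v 0) (h1 : u 1 = v 1) (n : ℕ) : u n = v n := by
  induction n using Nat.twoStepInduction with
  | zero => exact h0
  | one => exact h1
  | more n ihn ihn1 => rw [hu, hv, ihn, ihn1]

theorem M_sq_mulVec_one : M ^ 2 *ᵥ 1 = (2 : ℕ) • (M *ᵥ 1) + 1 := by
  decide

theorem aWalks_eq_mulVec_one (n : ℕ) : aWalks n = (M ^ n *ᵥ 1) 3 :=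
  (dotProduct_one _).symm

theorem aWalks_add_two (n : ℕ) : aWalks (n + 2) = 2 * aWalks (n + 1) + aWalks n := by
  simp only [aWalks_eq_mulVec_one, Matrix.pow_add_two_mulVec M_sq_mulVec_one n, Pi.add_apply,
    Pi.smul_apply, smul_eq_mul]

/-- The number of walks of `n` arrows starting at `a` equals `P_{n+1} + P_n`,
where `P` is the Pell sequence. -/
theorem aWalks_eq_pell (P : ℕ → ℕ) (hP0 : P 0 = 0) (hP1 : P 1 = 1)
    (hP : ∀ n, P (n + 2) = 2 * P (n + 1) + P n) :
    ∀ n, aWalks n = P (n + 1) + P n := by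
  refine eq_of_two_step_recurrence 2 aWalks_add_two (fun n => ?_) ?_ ?_
  · rw [hP (n + 1), hP n]
    ring
  · simp [aWalks_eq_mulVec_one, hP0, hP1]
  · simp only [hP 0, hP0, hP1]
    decide
end

section
/- Let S = ℂ⟨x,y,z⟩/(yz + zy + x², zx + xz + y², xy + yx + z²) be the degenerate Sklyanin algebra S(1,1,1), graded with x, y, z in degree 1. Then dim_ℂ S_d = 3·2^{d−1} for all d ≥ 1. -/
open FreeAlgebra

/-- Generators `x = X 0`, `y = X 1`, `z = X 2` of the free algebra `ℂ⟨x,y,z⟩`. -/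
noncomputable def X (i : Fin 3) : FreeAlgebra ℂ (Fin 3) := FreeAlgebra.ι ℂ i

/-- The defining relations of the degenerate Sklyanin algebra `S(1,1,1)`:
`yz + zy + x² = 0`, `zx + xz + y² = 0`, `xy + yx + z² = 0`. -/
def sklyaninRel : FreeAlgebra ℂ (Fin 3) → FreeAlgebra ℂ (Fin 3) → Prop :=
  fun p q => q = 0 ∧
    (p = X 1 * X 2 + X 2 * X 1 + X 0 * X 0 ∨
     p = X 2 * X 0 + X 0 * X 2 + X 1 * X 1 ∨
     p = X 0 * X 1 + X 1 * X 0 + X 2 * X 2)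

/-- The degenerate Sklyanin algebra `S(1,1,1) = ℂ⟨x,y,z⟩/(yz+zy+x², zx+xz+y², xy+yx+z²)`. -/
noncomputable def Sklyanin : Type := RingQuot sklyaninRel

noncomputable instance : Ring Sklyanin := inferInstanceAs (Ring (RingQuot sklyaninRel))
noncomputable instance : Algebra ℂ Sklyanin := inferInstanceAs (Algebra ℂ (RingQuot sklyaninRel))

/-- The span of the degree-`d` monomials in the free algebra `ℂ⟨x,y,z⟩`. -/
noncomputable def freeDeg (d : ℕ) : Submodule ℂ (FreeAlgebra ℂ (Fin 3)) :=
  Submodule.span ℂ {v | ∃ w : List (Fin 3), w.length = d ∧ v = (w.map (X ·)).prod}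

/-- The degree-`d` graded component of `S(1,1,1)`: the image in the quotient of
the span of all words of length `d` in the generators (the relations being
homogeneous of degree 2, this is the degree-`d` piece of the grading). -/
noncomputable def SklyaninDeg (d : ℕ) : Submodule ℂ Sklyanin :=
  (freeDeg d).map (RingQuot.mkAlgHom ℂ sklyaninRel).toLinearMap

/-!
Let `A = ℂ⟨y, z⟩`. The relations rewrite `x x`, `y x` and `z x` into words with `x` only in
front, so left multiplication by a generator preserves the span of the words `a u` with
`a ∈ {x, y, z}` and `u` a word in `y, z`; hence these `3 · 2ⁿ` words span `S_{n+1}`. They are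
independent because `S` acts on `A ⊕ x A` by right `A`-linear maps, i.e. through
`2 × 2` matrices over `A`, and reading off `s · 1` recovers each such word in the free algebra.
-/

namespace Sklyanin

noncomputable abbrev mk : FreeAlgebra ℂ (Fin 3) →ₐ[ℂ] Sklyanin :=
  RingQuot.mkAlgHom ℂ sklyaninRel

noncomputable abbrev gen (i : Fin 3) : Sklyanin := mk (X i)

theorem mk_eq_zero_of_rel {p : FreeAlgebra ℂ (Fin 3)} (h : sklyaninRel p 0) : mk p = 0 :=
  (RingQuot.mkAlgHom_rel ℂ h).trans (map_zero _)

theorem gen_zero_mul_gen_zero : gen 0 * gen 0 = -(gen 1 * gen 2) - gen 2 * gen 1 := by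
  have h := mk_eq_zero_of_rel ⟨rfl, Or.inl rfl⟩
  simp only [map_add, map_mul] at h
  linear_combination (norm := abel) h

theorem gen_one_mul_gen_zero : gen 1 * gen 0 = -(gen 0 * gen 1) - gen 2 * gen 2 := by
  have h := mk_eq_zero_of_rel ⟨rfl, Or.inr (Or.inr rfl)⟩
  simp only [map_add, map_mul] at h
  linear_combination (norm := abel) h

theorem gen_two_mul_gen_zero : gen 2 * gen 0 = -(gen 0 * gen 2) - gen 1 * gen 1 := by
  have h := mk_eq_zero_of_rel ⟨rfl, Or.inr (Or.inl rfl)⟩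
  simp only [map_add, map_mul] at h
  linear_combination (norm := abel) h

noncomputable def ofWord (w : List (Fin 3)) : FreeAlgebra ℂ (Fin 3) := (w.map (X ·)).prod

theorem ofWord_cons (a : Fin 3) (w : List (Fin 3)) : ofWord (a :: w) = X a * ofWord w :=
  List.prod_cons

/-- The word `a u` with `u` a word in `y = X 1` and `z = X 2`, whose letters are encoded in
`Fin 2` via `Fin.succ`. -/
def normalWord {n : ℕ} (p : Fin 3 × List.Vector (Fin 2) n) : List (Fin 3) :=
  p.1 :: p.2.toList.map Fin.succ

theorem normalWord_injective (n : ℕ) : Function.Injective (normalWord (n := n)) := by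
  rintro ⟨a, u⟩ ⟨b, v⟩ h
  simp only [normalWord, List.cons.injEq] at h
  exact Prod.ext h.1
    (List.Vector.toList_injective ((List.map_injective_iff.2 (Fin.succ_injective 2)) h.2))

noncomputable def normalMonomial (n : ℕ) (p : Fin 3 × List.Vector (Fin 2) n) : Sklyanin :=
  mk (ofWord (normalWord p))

noncomputable def normalSpan (n : ℕ) : Submodule ℂ Sklyanin :=
  Submodule.span ℂ (Set.range (normalMonomial n))

theorem normalMonomial_mem_normalSpan (n : ℕ) (p : Fin 3 × List.Vector (Fin 2) n) :
    normalMonomial n p ∈ normalSpan n :=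
  Submodule.subset_span (Set.mem_range_self p)

noncomputable def yzMonomial {n : ℕ} (v : List.Vector (Fin 2) n) : Sklyanin :=
  mk (ofWord (v.toList.map Fin.succ))

theorem yzMonomial_cons {n : ℕ} (c : Fin 2) (v : List.Vector (Fin 2) n) :
    yzMonomial (c ::ᵥ v) = gen c.succ * yzMonomial v := by
  simp [yzMonomial, ofWord_cons]

theorem normalMonomial_eq_gen_mul {n : ℕ} (a : Fin 3) (v : List.Vector (Fin 2) n) :
    normalMonomial n (a, v) = gen a * yzMonomial v := by
  simp [normalMonomial, yzMonomial, normalWord, ofWord_cons]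

theorem gen_mul_normalMonomial_mem_normalSpan (n : ℕ) (b : Fin 3)
    (p : Fin 3 × List.Vector (Fin 2) n) :
    gen b * normalMonomial n p ∈ normalSpan (n + 1) := by
  obtain ⟨a, v⟩ := p
  have mem (a : Fin 3) (c : Fin 2) :
      gen a * (gen c.succ * yzMonomial v) ∈ normalSpan (n + 1) := by
    rw [← yzMonomial_cons, ← normalMonomial_eq_gen_mul]
    exact normalMonomial_mem_normalSpan _ _
  rw [normalMonomial_eq_gen_mul, ← mul_assoc]
  cases a using Fin.cases with
  | succ c => rw [mul_assoc]; exact mem b c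
  | zero =>
    match b with
    | 0 =>
      rw [gen_zero_mul_gen_zero, sub_mul, neg_mul, mul_assoc, mul_assoc]
      exact sub_mem (neg_mem (mem 1 1)) (mem 2 0)
    | 1 =>
      rw [gen_one_mul_gen_zero, sub_mul, neg_mul, mul_assoc, mul_assoc]
      exact sub_mem (neg_mem (mem 0 0)) (mem 2 1)
    | 2 =>
      rw [gen_two_mul_gen_zero, sub_mul, neg_mul, mul_assoc, mul_assoc]
      exact sub_mem (neg_mem (mem 0 1)) (mem 1 0)

theorem gen_mul_mem_normalSpan {n : ℕ} (b : Fin 3) {s : Sklyanin} (hs : s ∈ normalSpan n) :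
    gen b * s ∈ normalSpan (n + 1) := by
  induction hs using Submodule.span_induction with
  | mem _ h => obtain ⟨p, rfl⟩ := h; exact gen_mul_normalMonomial_mem_normalSpan n b p
  | zero => simp
  | add _ _ _ _ hs ht => rw [mul_add]; exact add_mem hs ht
  | smul c _ _ hs => rw [mul_smul_comm]; exact Submodule.smul_mem _ c hs

theorem mk_ofWord_cons_mem_normalSpan (a : Fin 3) (w : List (Fin 3)) :
    mk (ofWord (a :: w)) ∈ normalSpan w.length := by
  induction w generalizing a with
  | nil =>
    simpa [normalMonomial_eq_gen_mul, yzMonomial, ofWord] using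
      normalMonomial_mem_normalSpan 0 (a, .nil)
  | cons b w ih => rw [ofWord_cons, map_mul]; exact gen_mul_mem_normalSpan a (ih b)

theorem sklyaninDeg_eq_span (d : ℕ) :
    SklyaninDeg d = Submodule.span ℂ ((fun w => mk (ofWord w)) '' {w | w.length = d}) := by
  refine (Submodule.map_span _ _).trans (congrArg _ ?_)
  ext s
  constructor
  · rintro ⟨_, ⟨w, hw, rfl⟩, rfl⟩
    exact ⟨w, hw, rfl⟩
  · rintro ⟨w, hw, rfl⟩
    exact ⟨_, ⟨w, hw, rfl⟩, rfl⟩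

theorem sklyaninDeg_succ (n : ℕ) : SklyaninDeg (n + 1) = normalSpan n := by
  rw [sklyaninDeg_eq_span, normalSpan]
  apply le_antisymm <;> rw [Submodule.span_le]
  · rintro _ ⟨_ | ⟨a, w⟩, hw, rfl⟩
    · simp at hw
    · obtain rfl : w.length = n := by simpa using hw
      exact mk_ofWord_cons_mem_normalSpan a w
  · rintro _ ⟨p, rfl⟩
    exact Submodule.subset_span ⟨normalWord p, by simp [normalWord], rfl⟩

/-- Left multiplication by `x, y, z` on `S = A ⊕ x A`, `A = ℂ⟨y, z⟩`, in the coordinates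
`(a, b) ↦ a + x b`. It commutes with right multiplication by `A`, hence is given by `2 × 2`
matrices over `A`. -/
noncomputable def toMatrixFree :
    FreeAlgebra ℂ (Fin 3) →ₐ[ℂ] Matrix (Fin 2) (Fin 2) (FreeAlgebra ℂ (Fin 3)) :=
  FreeAlgebra.lift ℂ ![!![0, -(X 1 * X 2 + X 2 * X 1); 1, 0],
    !![X 1, -(X 2 * X 2); 0, -X 1], !![X 2, -(X 1 * X 1); 0, -X 2]]

theorem toMatrixFree_rel ⦃p q : FreeAlgebra ℂ (Fin 3)⦄ (h : sklyaninRel p q) :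
    toMatrixFree p = toMatrixFree q := by
  obtain ⟨rfl, rfl | rfl | rfl⟩ := h <;>
  · simp only [toMatrixFree, X, map_add, map_mul, map_zero, FreeAlgebra.lift_ι_apply]
    ext i j
    fin_cases i <;> fin_cases j <;> simp
    all_goals noncomm_ring

noncomputable def toMatrix :
    Sklyanin →ₐ[ℂ] Matrix (Fin 2) (Fin 2) (FreeAlgebra ℂ (Fin 3)) :=
  RingQuot.liftAlgHom ℂ ⟨toMatrixFree, toMatrixFree_rel⟩

theorem toMatrix_mk (p : FreeAlgebra ℂ (Fin 3)) : toMatrix (mk p) = toMatrixFree p :=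
  RingQuot.liftAlgHom_mkAlgHom_apply ℂ _ _ p

/-- Reads `s = s · 1` in the coordinates of `A ⊕ x A`, from the first column of `toMatrix s`. -/
noncomputable def normalForm : Sklyanin →ₗ[ℂ] FreeAlgebra ℂ (Fin 3) :=
  Matrix.entryLinearMap ℂ _ 0 0 ∘ₗ toMatrix.toLinearMap +
    LinearMap.mulLeft ℂ (X 0) ∘ₗ Matrix.entryLinearMap ℂ _ 1 0 ∘ₗ toMatrix.toLinearMap

theorem toMatrixFree_ofWord_map_succ (w : List (Fin 2)) :
    toMatrixFree (ofWord (w.map Fin.succ)) 0 0 = ofWord (w.map Fin.succ) ∧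
      toMatrixFree (ofWord (w.map Fin.succ)) 1 0 = 0 := by
  induction w with
  | nil => simp [ofWord]
  | cons c w ih =>
    simp only [List.map_cons, ofWord_cons, map_mul, Matrix.mul_apply, Fin.sum_univ_two, ih.1,
      ih.2]
    fin_cases c <;> simp [toMatrixFree, X]

theorem normalForm_normalMonomial {n : ℕ} (p : Fin 3 × List.Vector (Fin 2) n) :
    normalForm (normalMonomial n p) = ofWord (normalWord p) := by
  obtain ⟨h00, h10⟩ := toMatrixFree_ofWord_map_succ p.2.toList
  obtain ⟨a, v⟩ := p
  simp only [normalForm, normalMonomial, normalWord, LinearMap.add_apply, LinearMap.comp_apply,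
    AlgHom.toLinearMap_apply, toMatrix_mk, Matrix.entryLinearMap_apply, LinearMap.mulLeft_apply,
    ofWord_cons, map_mul, Matrix.mul_apply, Fin.sum_univ_two, h00, h10]
  fin_cases a <;> simp [toMatrixFree, X]

theorem linearIndependent_ofWord : LinearIndependent ℂ ofWord := by
  have h := (basisFreeMonoid ℂ (Fin 3)).linearIndependent.comp FreeMonoid.ofList
    FreeMonoid.ofList.injective
  have hw : ⇑(basisFreeMonoid ℂ (Fin 3)) ∘ FreeMonoid.ofList = ofWord := by
    ext w
    simp only [basisFreeMonoid, equivMonoidAlgebraFreeMonoid, Function.comp_apply,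
      Module.Basis.map_apply, Finsupp.coe_basisSingleOne, LinearEquiv.trans_symm,
      LinearEquiv.trans_apply, MonoidAlgebra.coeffLinearEquiv_symm_apply,
      MonoidAlgebra.ofCoeff_single, AlgEquiv.coe_symm_toLinearEquiv, AlgEquiv.ofAlgHom_symm_apply,
      MonoidAlgebra.lift_single, FreeMonoid.lift_ofList, one_smul, ofWord]
    rfl
  rwa [hw] at h

theorem linearIndependent_normalMonomial (n : ℕ) :
    LinearIndependent ℂ (normalMonomial n) := by
  refine LinearIndependent.of_comp normalForm ?_
  convert linearIndependent_ofWord.comp _ (normalWord_injective n) using 1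
  ext p
  exact normalForm_normalMonomial p

end Sklyanin

/-- `dim_ℂ S(1,1,1)_d = 3·2^{d−1}` for all `d ≥ 1`. -/
theorem sklyanin_hilbert (d : ℕ) (hd : 1 ≤ d) :
    Module.finrank ℂ (SklyaninDeg d) = 3 * 2 ^ (d - 1) := by
  obtain ⟨n, rfl⟩ := Nat.exists_eq_add_of_le' hd
  rw [Sklyanin.sklyaninDeg_succ, Sklyanin.normalSpan,
    finrank_span_eq_card (Sklyanin.linearIndependent_normalMonomial n)]
  simp
end
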